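/- Let μ, ν be probability measures on a measurable space, X a measurable map to another space inducing pushforwards, and suppose measures P_Y, P_X on path space disintegrate as dP_Y/dP_X = (dP_{Y^x}/dP_{X^x}) · (dP_{Y₀}/dP_{X₀}) where P_{X^x} = P_{Z^x} for all x and P_{Z₀} = P_{Y₀}. Then the KL divergence satisfies the chain rule D_KL(P_Y | P_X) = D_KL(P_Y | P_Z) + D_KL(P_{Y₀} | P_{X₀}). -/

import Mathlib

open MeasureTheory ProbabilityTheory

lemma compProd_eq_withDensity_fst {A B : Type*} [MeasurableSpace A] [MeasurableSpace B]
    (μ ν : Measure A) [IsProbabilityMeasure μ] [IsProbabilityMeasure ν]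
    (κ : Kernel A B) [IsMarkovKernel κ] (hμν : μ ≪ ν) :
    μ.compProd κ = (ν.compProd κ).withDensity (fun p => μ.rnDeriv ν p.1) := by
  have hg : Measurable (fun p : A × B => μ.rnDeriv ν p.1) :=
    (Measure.measurable_rnDeriv μ ν).comp measurable_fst
  ext s hs
  rw [withDensity_apply _ hs, Measure.compProd_apply hs, ← lintegral_indicator hs,
    Measure.lintegral_compProd (hg.indicator hs)]
  have : ∀ a : A, ∫⁻ b, s.indicator (fun p : A × B => μ.rnDeriv ν p.1) (a, b) ∂(κ a)
      = μ.rnDeriv ν a * κ a (Prod.mk a ⁻¹' s) := by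
    intro a
    have heq : (fun b => s.indicator (fun p : A × B => μ.rnDeriv ν p.1) (a, b))
        = (Prod.mk a ⁻¹' s).indicator (fun _ => μ.rnDeriv ν a) := by
      ext b
      by_cases hb : (a, b) ∈ s
      · rw [Set.indicator_of_mem hb, Set.indicator_of_mem (show b ∈ Prod.mk a ⁻¹' s from hb)]
      · rw [Set.indicator_of_notMem hb,
          Set.indicator_of_notMem (show b ∉ Prod.mk a ⁻¹' s from hb)]
    rw [heq, lintegral_indicator (measurable_prodMk_left hs), setLIntegral_const, mul_comm]
  simp_rw [this]
  exact (lintegral_rnDeriv_mul hμν (Kernel.measurable_kernel_prodMk_left hs).aemeasurable).symm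

/-- Kullback–Leibler divergence `D_KL(P|Q) = E_P[log dP/dQ]`. -/
noncomputable def klDivergence {Ω : Type*} [MeasurableSpace Ω] (P Q : Measure Ω) : ℝ :=
  ∫ ω, Real.log (P.rnDeriv Q ω).toReal ∂P

/-- Chain rule (disintegration) for the KL divergence: if `P_Y = μ ⊗ κ₁`, `P_X = ν ⊗ κ₂`
and `P_Z = μ ⊗ κ₂` (same dynamics as `X`, initial distribution of `Y`), then
`D_KL(P_Y | P_X) = D_KL(P_Y | P_Z) + D_KL(μ | ν)`. -/
theorem klDivergence_chain_rule {A B : Type*} [MeasurableSpace A] [MeasurableSpace B]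
    (μ ν : Measure A) [IsProbabilityMeasure μ] [IsProbabilityMeasure ν]
    (κ₁ κ₂ : Kernel A B) [IsMarkovKernel κ₁] [IsMarkovKernel κ₂]
    (hμν : μ ≪ ν) (hκ : ∀ a, κ₁ a ≪ κ₂ a)
    (h₁ : Integrable
      (fun z => Real.log (((μ.compProd κ₁).rnDeriv (ν.compProd κ₂)) z).toReal)
      (μ.compProd κ₁))
    (h₂ : Integrable
      (fun z => Real.log (((μ.compProd κ₁).rnDeriv (μ.compProd κ₂)) z).toReal)
      (μ.compProd κ₁))
    (h₃ : Integrable (fun a => Real.log ((μ.rnDeriv ν) a).toReal) μ) :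
    klDivergence (μ.compProd κ₁) (ν.compProd κ₂) =
      klDivergence (μ.compProd κ₁) (μ.compProd κ₂) + klDivergence μ ν := by
  set P := μ.compProd κ₁ with hP
  set Z := μ.compProd κ₂ with hZ
  set Q := ν.compProd κ₂ with hQ
  have hPZ : P ≪ Z := Measure.AbsolutelyContinuous.compProd_right (ae_of_all _ hκ)
  have hZQ : Z ≪ Q := Measure.AbsolutelyContinuous.compProd_left hμν κ₂
  have hPQ : P ≪ Q := hPZ.trans hZQ
  have hg : Measurable (fun p : A × B => μ.rnDeriv ν p.1) :=
    (Measure.measurable_rnDeriv μ ν).comp measurable_fst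
  -- rnDeriv of Z w.r.t. Q is the density of μ w.r.t. ν composed with fst
  have h_rnZQ : Z.rnDeriv Q =ᵐ[Q] fun p => μ.rnDeriv ν p.1 := by
    rw [hZ, hQ, compProd_eq_withDensity_fst μ ν κ₂ hμν]
    exact Measure.rnDeriv_withDensity _ hg
  -- chain rule for Radon–Nikodym derivatives
  have h_chain : P.rnDeriv Z * Z.rnDeriv Q =ᵐ[Q] P.rnDeriv Q :=
    Measure.rnDeriv_mul_rnDeriv hPZ
  -- positivity and finiteness a.e. [P]
  have h_pos1 : ∀ᵐ p ∂P, 0 < P.rnDeriv Z p := Measure.rnDeriv_pos hPZ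
  have h_fin1 : ∀ᵐ p ∂P, P.rnDeriv Z p ≠ ⊤ := hPZ.ae_le (Measure.rnDeriv_ne_top P Z)
  have h_pos2 : ∀ᵐ p ∂P, 0 < Z.rnDeriv Q p := hPZ.ae_le (Measure.rnDeriv_pos hZQ)
  have h_fin2 : ∀ᵐ p ∂P, Z.rnDeriv Q p ≠ ⊤ := hPQ.ae_le (Measure.rnDeriv_ne_top Z Q)
  -- a.e. [P] identity for the logarithms
  have h_log : (fun p => Real.log (P.rnDeriv Q p).toReal) =ᵐ[P]
      (fun p => Real.log (P.rnDeriv Z p).toReal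
        + Real.log ((μ.rnDeriv ν) p.1).toReal) := by
    filter_upwards [hPQ.ae_le h_chain, hPQ.ae_le h_rnZQ, h_pos1, h_fin1, h_pos2, h_fin2]
      with p hc hr hp1 hf1 hp2 hf2
    rw [← hc, Pi.mul_apply, ENNReal.toReal_mul, Real.log_mul, hr]
    · exact (ENNReal.toReal_ne_zero).mpr ⟨hp1.ne', hf1⟩
    · exact (ENNReal.toReal_ne_zero).mpr ⟨hp2.ne', hf2⟩
  -- integrability of the second term
  have hμfst : P.map Prod.fst = μ := by
    rw [hP, ← Measure.fst]; exact Measure.fst_compProd μ κ₁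
  have h_meas : Measurable fun a => Real.log ((μ.rnDeriv ν) a).toReal :=
    (Measure.measurable_rnDeriv μ ν).ennreal_toReal.log
  have h₃' : Integrable (fun a => Real.log ((μ.rnDeriv ν) a).toReal) (P.map Prod.fst) := by
    rw [hμfst]; exact h₃
  have h_int2 : Integrable (fun p : A × B => Real.log ((μ.rnDeriv ν) p.1).toReal) P :=
    (integrable_map_measure h_meas.aestronglyMeasurable measurable_fst.aemeasurable).mp h₃'
  have h_int_eq : ∫ p, Real.log ((μ.rnDeriv ν) p.1).toReal ∂P
      = ∫ a, Real.log ((μ.rnDeriv ν) a).toReal ∂μ := by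
    rw [← integral_map measurable_fst.aemeasurable h_meas.aestronglyMeasurable, hμfst]
  calc klDivergence P Q = ∫ p, (Real.log (P.rnDeriv Z p).toReal
        + Real.log ((μ.rnDeriv ν) p.1).toReal) ∂P := integral_congr_ae h_log
    _ = ∫ p, Real.log (P.rnDeriv Z p).toReal ∂P
        + ∫ p, Real.log ((μ.rnDeriv ν) p.1).toReal ∂P := integral_add h₂ h_int2
    _ = klDivergence P Z + klDivergence μ ν := by rw [h_int_eq]; rfl
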